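/- Let k₁ = k₁(λ) denote the unique positive root of F_λ as a function of the jump intensity λ ≥ 0 (with σ, α, r, 𝔪 fixed). If α < r, then k₁ is strictly decreasing in λ: 0 ≤ λ < λ̂ implies k₁(λ̂) < k₁(λ); if α > r, then k₁ is strictly increasing in λ: 0 ≤ λ < λ̂ implies k₁(λ̂) > k₁(λ). -/

import Mathlib

/-!
For each `λ ≥ 0`, `F_λ` is strictly convex on `[0, ∞)` and `F_λ(0) = -r < 0`, so it is negative
strictly between `0` and its positive root `k₁(λ)` and positive beyond it. As `F_λ(1) = α - r`,
that root lies above `1` when `α < r` and below `1` when `α > r`. Finally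
`F_λ̂ - F_λ = (λ̂ - λ) J` with `J(k) = ∫ ((1 - z)^k - (1 - k z)) 𝔪(dz)`, and Bernoulli's inequality
makes `J(k)` positive for `k > 1` and negative for `0 < k < 1`. Hence `F_λ̂(k₁(λ))` has the sign
of `r - α`, which puts `k₁(λ̂)` on the corresponding side of `k₁(λ)`.
-/

open Set MeasureTheory

theorem StrictConvexOn.neg_of_lt_root {f : ℝ → ℝ} {a b x : ℝ} (hf : StrictConvexOn ℝ (Ici a) f)
    (ha : f a ≤ 0) (hb : f b = 0) (hax : a < x) (hxb : x < b) : f x < 0 := by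
  have := hf.lt_on_openSegment self_mem_Ici (hax.trans hxb).le (hax.trans hxb).ne
    (by rw [openSegment_eq_Ioo (hax.trans hxb)]; exact ⟨hax, hxb⟩)
  simpa [hb, ha] using this

theorem StrictConvexOn.pos_of_root_lt {f : ℝ → ℝ} {a b x : ℝ} (hf : StrictConvexOn ℝ (Ici a) f)
    (ha : f a ≤ 0) (hb : f b = 0) (hab : a < b) (hbx : b < x) : 0 < f x := by
  have := hf.lt_on_openSegment self_mem_Ici (hab.trans hbx).le (hab.trans hbx).ne
    (by rw [openSegment_eq_Ioo (hab.trans hbx)]; exact ⟨hab, hbx⟩)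
  rw [hb] at this
  exact (lt_max_iff.1 this).resolve_left ha.not_gt

theorem StrictConvexOn.neg_iff_lt_of_root {f : ℝ → ℝ} {a b x : ℝ}
    (hf : StrictConvexOn ℝ (Ici a) f) (ha : f a ≤ 0) (hab : a < b) (hb : f b = 0) (hax : a < x) :
    f x < 0 ↔ x < b := by
  refine ⟨fun hx => lt_of_not_ge fun hbx => ?_, hf.neg_of_lt_root ha hb hax⟩
  rcases hbx.eq_or_lt with rfl | hbx
  · exact hx.ne hb
  · exact hx.not_gt (hf.pos_of_root_lt ha hb hab hbx)

theorem StrictConvexOn.pos_iff_lt_of_root {f : ℝ → ℝ} {a b x : ℝ}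
    (hf : StrictConvexOn ℝ (Ici a) f) (ha : f a ≤ 0) (hab : a < b) (hb : f b = 0) (hax : a < x) :
    0 < f x ↔ b < x := by
  refine ⟨fun hx => lt_of_not_ge fun hxb => ?_, hf.pos_of_root_lt ha hb hab⟩
  rcases hxb.eq_or_lt with rfl | hxb
  · exact hx.ne' hb
  · exact hx.not_gt (hf.neg_of_lt_root ha hb hax hxb)

theorem strictConvexOn_quadratic {a b c : ℝ} (ha : 0 < a) :
    StrictConvexOn ℝ univ fun x => a * x ^ 2 + b * x + c := by
  refine ⟨convex_univ, fun x _ y _ hxy s t hs ht hst => ?_⟩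
  have : 0 < a * s * t * (x - y) ^ 2 := by
    have := sub_ne_zero.2 hxy
    positivity
  simp only [smul_eq_mul]
  obtain rfl : t = 1 - s := by linarith
  nlinarith

theorem integral_pos_of_ae_pos {α : Type*} [MeasurableSpace α] {μ : Measure α} [NeZero μ]
    {f : α → ℝ} (hfi : Integrable f μ) (hf : ∀ᵐ x ∂μ, 0 < f x) : 0 < ∫ x, f x ∂μ := by
  rw [integral_pos_iff_support_of_nonneg_ae (hf.mono fun _ h => h.le) hfi]
  refine pos_iff_ne_zero.2 fun h0 => ?_
  have : ∀ᵐ x ∂μ, False := by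
    filter_upwards [hf, measure_eq_zero_iff_ae_notMem.1 h0] with x hpos hx
    exact hx (Function.mem_support.2 hpos.ne')
  exact (ae_neBot.2 (NeZero.ne μ)).ne (Filter.eventually_false_iff_eq_bot.1 this)

theorem convexOn_integral {α E : Type*} [MeasurableSpace α] {μ : Measure α} [AddCommGroup E]
    [Module ℝ E] {s : Set E} {f : α → E → ℝ} (hconv : Convex ℝ s)
    (hf : ∀ᵐ ω ∂μ, ConvexOn ℝ s (f ω)) (hfi : ∀ x ∈ s, Integrable (f · x) μ) :
    ConvexOn ℝ s fun x => ∫ ω, f ω x ∂μ := by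
  refine ⟨hconv, fun x hx y hy a b ha hb hab => ?_⟩
  simp only [smul_eq_mul]
  calc ∫ ω, f ω (a • x + b • y) ∂μ ≤ ∫ ω, (a * f ω x + b * f ω y) ∂μ :=
        integral_mono_ae (hfi _ (hconv hx hy ha hb hab))
          (((hfi x hx).const_mul a).add ((hfi y hy).const_mul b))
          (hf.mono fun _ h => h.2 hx hy ha hb hab)
    _ = a * ∫ ω, f ω x ∂μ + b * ∫ ω, f ω y ∂μ := by
        rw [integral_add ((hfi x hx).const_mul a) ((hfi y hy).const_mul b), integral_const_mul,
          integral_const_mul]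

noncomputable def jumpTerm (m : Measure ℝ) (k : ℝ) : ℝ :=
  ∫ z, ((1 - z) ^ k - (1 - k * z)) ∂m

@[simp] theorem jumpTerm_zero (m : Measure ℝ) : jumpTerm m 0 = 0 := by
  simp [jumpTerm]

@[simp] theorem jumpTerm_one (m : Measure ℝ) : jumpTerm m 1 = 0 := by
  simp [jumpTerm]

section SupportedOnUnitInterval

variable {m : Measure ℝ} (hm : ∀ᵐ z ∂m, z ∈ Ioo (0 : ℝ) 1) (hint : Integrable (fun z => z) m)
include hm

theorem integrable_one_sub_rpow [IsFiniteMeasure m] {k : ℝ} (hk : 0 ≤ k) :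
    Integrable (fun z => (1 - z) ^ k) m := by
  refine Integrable.mono' (integrable_const 1)
    ((continuous_const.sub continuous_id).rpow_const fun _ => Or.inr hk).aestronglyMeasurable ?_
  filter_upwards [hm] with z hz
  rw [Real.norm_eq_abs, abs_of_nonneg (Real.rpow_nonneg (by linarith [hz.2]) k)]
  exact Real.rpow_le_one (by linarith [hz.2]) (by linarith [hz.1]) hk

include hint

theorem integrable_jumpTerm_integrand [IsFiniteMeasure m] {k : ℝ} (hk : 0 ≤ k) :
    Integrable (fun z => (1 - z) ^ k - (1 - k * z)) m :=
  (integrable_one_sub_rpow hm hk).sub ((integrable_const 1).sub (hint.const_mul k))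

theorem jumpTerm_eq [IsProbabilityMeasure m] {k : ℝ} (hk : 0 ≤ k) :
    jumpTerm m k = ∫ z, (1 - z) ^ k ∂m - 1 + k * ∫ z, z ∂m := by
  have hlin : Integrable (fun z => 1 - k * z) m := (integrable_const 1).sub (hint.const_mul k)
  rw [jumpTerm, integral_sub (integrable_one_sub_rpow hm hk) hlin,
    integral_sub (integrable_const 1) (hint.const_mul k), integral_const_mul]
  simp only [integral_const, probReal_univ, smul_eq_mul, mul_one]
  ring

theorem convexOn_jumpTerm [IsFiniteMeasure m] : ConvexOn ℝ (Ici 0) (jumpTerm m) := by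
  refine convexOn_integral (convex_Ici 0) ?_ fun k hk => integrable_jumpTerm_integrand hm hint hk
  filter_upwards [hm] with z hz
  refine ⟨convex_Ici 0, fun x _ y _ a b ha hb hab => ?_⟩
  have := (convexOn_rpow_left (sub_pos.2 hz.2)).2 (mem_univ x) (mem_univ y) ha hb hab
  simp only [smul_eq_mul] at *
  linear_combination this + hab

/-- Bernoulli's inequality, integrated against `m`. -/
theorem jumpTerm_pos [IsProbabilityMeasure m] {k : ℝ} (hk : 1 < k) : 0 < jumpTerm m k :=
  integral_pos_of_ae_pos (integrable_jumpTerm_integrand hm hint (by linarith)) <| by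
    filter_upwards [hm] with z hz
    have := one_add_mul_self_lt_rpow_one_add (s := -z) (by linarith [hz.2]) (by linarith [hz.1]) hk
    rw [← sub_eq_add_neg] at this
    linarith

theorem jumpTerm_neg [IsProbabilityMeasure m] {k : ℝ} (hk₀ : 0 < k) (hk₁ : k < 1) :
    jumpTerm m k < 0 := by
  have := integral_pos_of_ae_pos (f := fun z => -((1 - z) ^ k - (1 - k * z)))
    (integrable_jumpTerm_integrand hm hint hk₀.le).neg <| by
    filter_upwards [hm] with z hz
    have := rpow_one_add_lt_one_add_mul_self (s := -z) (by linarith [hz.2]) (by linarith [hz.1])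
      hk₀ hk₁
    rw [← sub_eq_add_neg] at this
    linarith
  rw [integral_neg] at this
  exact neg_pos.1 this

end SupportedOnUnitInterval

/-- The paper's `F_λ(k)`. -/
noncomputable def charFn (sigma alpha r : ℝ) (m : Measure ℝ) (l k : ℝ) : ℝ :=
  1 / 2 * sigma ^ 2 * k * (k - 1) + alpha * k - r + l * jumpTerm m k

section CharFn

variable {sigma alpha r l : ℝ} {m : Measure ℝ}

@[simp] theorem charFn_zero : charFn sigma alpha r m l 0 = -r := by
  simp [charFn]

@[simp] theorem charFn_one : charFn sigma alpha r m l 1 = alpha - r := by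
  simp [charFn]

theorem charFn_eq [IsProbabilityMeasure m] (hm : ∀ᵐ z ∂m, z ∈ Ioo (0 : ℝ) 1)
    (hint : Integrable (fun z => z) m) {k : ℝ} (hk : 0 ≤ k) :
    charFn sigma alpha r m l k = 1 / 2 * sigma ^ 2 * k * (k - 1) + (alpha + l * ∫ z, z ∂m) * k -
      (r + l) + l * ∫ z, (1 - z) ^ k ∂m := by
  rw [charFn, jumpTerm_eq hm hint hk]
  ring

theorem strictConvexOn_charFn [IsFiniteMeasure m] (hsigma : 0 < sigma)
    (hm : ∀ᵐ z ∂m, z ∈ Ioo (0 : ℝ) 1) (hint : Integrable (fun z => z) m) (hl : 0 ≤ l) :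
    StrictConvexOn ℝ (Ici 0) (charFn sigma alpha r m l) := by
  have hquad := strictConvexOn_quadratic (b := alpha - 1 / 2 * sigma ^ 2) (c := -r)
    (by positivity : 0 < 1 / 2 * sigma ^ 2)
  have hsplit : charFn sigma alpha r m l =
      (fun k => 1 / 2 * sigma ^ 2 * k ^ 2 + (alpha - 1 / 2 * sigma ^ 2) * k + -r) +
        fun k => l • jumpTerm m k := by
    ext k
    simp only [charFn, Pi.add_apply, smul_eq_mul]
    ring
  rw [hsplit]
  exact (hquad.subset (subset_univ _) (convex_Ici 0)).add_convexOn
    ((convexOn_jumpTerm hm hint).smul hl)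

end CharFn

/-- Geometric case of the paper's Theorem 5.2: the unique positive root `k₁(λ)` of
the geometric characteristic equation is strictly decreasing in the jump
intensity `λ` when `α < r` and strictly increasing in `λ` when `α > r`. -/
theorem geometric_root_monotone_in_intensity
    (sigma alpha r : ℝ)
    (hsigma : 0 < sigma) (hr : 0 < r)
    (m : Measure ℝ) [IsProbabilityMeasure m]
    (hm : m (Ioo 0 1)ᶜ = 0)
    (hint : Integrable (fun z => z) m)
    (mbar : ℝ) (hmbar : mbar = ∫ z, z ∂m)
    (k₁ : ℝ → ℝ)
    (hk₁ : ∀ l : ℝ, 0 ≤ l → 0 < k₁ l ∧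
      1 / 2 * sigma ^ 2 * k₁ l * (k₁ l - 1) + (alpha + l * mbar) * k₁ l -
        (r + l) + l * ∫ z, (1 - z) ^ (k₁ l) ∂m = 0) :
    (alpha < r → ∀ l lhat : ℝ, 0 ≤ l → l < lhat → k₁ lhat < k₁ l) ∧
    (r < alpha → ∀ l lhat : ℝ, 0 ≤ l → l < lhat → k₁ l < k₁ lhat) := by
  subst hmbar
  replace hm : ∀ᵐ z ∂m, z ∈ Ioo (0 : ℝ) 1 := mem_ae_iff.2 hm
  set F := charFn sigma alpha r m
  have hroot (l : ℝ) (hl : 0 ≤ l) : F l (k₁ l) = 0 := by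
    rw [show F l (k₁ l) = _ from charFn_eq hm hint (hk₁ l hl).1.le]
    exact (hk₁ l hl).2
  have hconv (l : ℝ) (hl : 0 ≤ l) :=
    strictConvexOn_charFn (alpha := alpha) (r := r) hsigma hm hint hl
  have hF0 (l : ℝ) : F l 0 ≤ 0 := by simp [F, hr.le]
  have hneg (l x : ℝ) (hl : 0 ≤ l) (hx : 0 < x) : F l x < 0 ↔ x < k₁ l :=
    (hconv l hl).neg_iff_lt_of_root (hF0 l) (hk₁ l hl).1 (hroot l hl) hx
  have hpos (l x : ℝ) (hl : 0 ≤ l) (hx : 0 < x) : 0 < F l x ↔ k₁ l < x :=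
    (hconv l hl).pos_iff_lt_of_root (hF0 l) (hk₁ l hl).1 (hroot l hl) hx
  have hshift (l lhat : ℝ) (hl : 0 ≤ l) : F lhat (k₁ l) = (lhat - l) * jumpTerm m (k₁ l) := by
    have := hroot l hl
    simp only [F, charFn] at this ⊢
    linear_combination this
  constructor
  · intro halpha l lhat hl hlhat
    have h1 : 1 < k₁ l := (hneg l 1 hl one_pos).1 (by simpa [F] using halpha)
    refine (hpos lhat _ (hl.trans hlhat.le) (hk₁ l hl).1).1 ?_
    rw [hshift l lhat hl]
    exact mul_pos (sub_pos.2 hlhat) (jumpTerm_pos hm hint h1)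
  · intro halpha l lhat hl hlhat
    have h1 : k₁ l < 1 := (hpos l 1 hl one_pos).1 (by simpa [F] using halpha)
    refine (hneg lhat _ (hl.trans hlhat.le) (hk₁ l hl).1).1 ?_
    rw [hshift l lhat hl]
    exact mul_neg_of_pos_of_neg (sub_pos.2 hlhat) (jumpTerm_neg hm hint (hk₁ l hl).1 h1)
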